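/- Let a > 0 and b ∈ ℝ. For any real τ satisfying τ > (2/a) · max(log(1/a) - b, 0), it holds that a·τ + b ≥ log τ. -/
import Mathlib


theorem antos_lemma8 (a b τ : ℝ) (ha : 0 < a) (hτpos : 0 < τ)
    (hτ : τ > (2 / a) * max (Real.log (1 / a) - b) 0) :
    a * τ + b ≥ Real.log τ := by
  have ha' : a ≠ 0 := ne_of_gt ha
  have hx : (0:ℝ) < τ * (a / 2) := by positivity
  have h1 : Real.log (τ * (a / 2)) ≤ τ * (a / 2) - 1 :=
    Real.log_le_sub_one_of_pos hx
  have h2 : Real.log (τ * (a / 2)) = Real.log τ + Real.log a - Real.log 2 := by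
    rw [Real.log_mul (ne_of_gt hτpos) (by positivity), Real.log_div ha' two_ne_zero]
    ring
  have hlog2 : Real.log 2 ≤ 1 := by
    have := Real.log_le_sub_one_of_pos (x := 2) (by norm_num)
    linarith
  have hinv : Real.log (1 / a) = - Real.log a := by
    rw [one_div, Real.log_inv]
  -- from hypothesis: log(1/a) - b ≤ a*τ/2
  have hmax : Real.log (1 / a) - b ≤ max (Real.log (1 / a) - b) 0 := le_max_left _ _
  have hkey : Real.log (1 / a) - b ≤ a * τ / 2 := by
    have h3 : (2 / a) * max (Real.log (1 / a) - b) 0 < τ := hτ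
    have haa : (2 / a) * a = 2 := div_mul_cancel₀ 2 ha'
    have h4 : max (Real.log (1 / a) - b) 0 ≤ a * τ / 2 := by
      nlinarith [mul_le_mul_of_nonneg_right h3.le ha.le,
        le_max_right (Real.log (1 / a) - b) (0:ℝ)]
    linarith
  nlinarith [h1, h2]
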